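/- arXiv:1510.08781 — 2 statements merged into one kernel-verified Lean document; each statement's English description precedes it below -/
import Mathlib

section
/- In the metric space (F, sqrt(ρ)) no point is isolated; that is, F is a perfect Polish space in the topology induced by the metric sqrt(ρ). -/
/-! Removing the `k`-th element `m` of `g ∈ F` changes `α^g` only at `m`, by
`a_k = 1/(2√(k+1))`, and at the later elements of `g`, whose index drops by one, by
`a_{j-1} - a_j`. As `a` is decreasing and nonnegative,
`∑_{j>k} (a_{j-1} - a_j)² ≤ a_k ∑_{j>k} (a_{j-1} - a_j) ≤ a_k²`, so
`ρ(g, g ∖ {m}) ≤ 2 a_k² = 1/(2(k+1))`, which is small for large `k`. The set `g ∖ {m}` stays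
in `F` because `ρ(x,z) ≤ 2ρ(x,y) + 2ρ(y,z)`. -/

open MeasureTheory Filter Set
open scoped ENNReal

noncomputable section

/-- `fEnum x` is the increasing enumeration `f_x : ω → ω` of the set `x ∈ [ω]^ω`. -/
def fEnum (x : Set ℕ) : ℕ → ℕ := Nat.nth (· ∈ x)

/-- The sequence `α^x ∈ [1/4,3/4]^ω` attached to `x ∈ [ω]^ω`:
`α^x_n = 1/4 + 1/(2·√(f_x⁻¹(n)+1))` if `n ∈ x` and `α^x_n = 1/4` otherwise
(for `n ∈ x`, `f_x⁻¹(n)` is the number of elements of `x` below `n`). -/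
noncomputable def alphaSeq (x : Set ℕ) (n : ℕ) : ℝ :=
  haveI := Classical.decPred (· ∈ x)
  if n ∈ x then 1/4 + 1/(2 * Real.sqrt ((Nat.count (· ∈ x) n : ℝ) + 1)) else 1/4

/-- `ρ(x,y) = Σ_n (α^x_n - α^y_n)² ∈ [0,∞]`. -/
noncomputable def rho (x y : Set ℕ) : ℝ≥0∞ :=
  ∑' n : ℕ, ENNReal.ofReal ((alphaSeq x n - alphaSeq y n)^2)

/-- `F = {g ∈ [ω]^ω : ρ(g,ω) < ∞}`. -/
def Fset : Set (Set ℕ) := {g | g.Infinite ∧ rho g Set.univ < ⊤}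

/-- The monoid operation `x · y = (f_y ∘ f_x)[ω]`. -/
def dotOp (x y : Set ℕ) : Set ℕ := Set.range (fEnum y ∘ fEnum x)

/-- `IsKakutaniProduct x μ` says that `μ` is the product measure
`μ^x = ∏_n (α^x_n δ_0 + (1 - α^x_n) δ_1)` on Cantor space `2^ω = ℕ → Bool`
(identifying `0` with `false` and `1` with `true`), i.e. `μ` is the Borel
probability measure giving each finite cylinder the corresponding product of
the coordinate weights.  These conditions determine `μ^x` uniquely. -/
def IsKakutaniProduct (x : Set ℕ) (μ : Measure (ℕ → Bool)) : Prop :=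
  IsProbabilityMeasure μ ∧
    ∀ (s : Finset ℕ) (f : ℕ → Bool),
      μ {g | ∀ n ∈ s, g n = f n} =
        ∏ n ∈ s, (if f n = false then ENNReal.ofReal (alphaSeq x n)
                  else ENNReal.ofReal (1 - alphaSeq x n))

/-- The subset of `ℕ` coded by a point of Cantor space. -/
def toSet (f : ℕ → Bool) : Set ℕ := {n | f n = true}

def alphaExcess (j : ℕ) : ℝ := 1 / (2 * Real.sqrt ((j : ℝ) + 1))

lemma alphaExcess_nonneg (j : ℕ) : 0 ≤ alphaExcess j := by
  unfold alphaExcess; positivity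

lemma alphaExcess_antitone : Antitone alphaExcess := by
  intro i j hij
  unfold alphaExcess
  gcongr

lemma alphaExcess_sq (j : ℕ) : alphaExcess j ^ 2 = 1 / (4 * ((j : ℝ) + 1)) := by
  rw [alphaExcess, div_pow, mul_pow, Real.sq_sqrt (by positivity)]
  norm_num

lemma alphaSeq_of_mem {x : Set ℕ} [DecidablePred (· ∈ x)] {n : ℕ} (hn : n ∈ x) :
    alphaSeq x n = 1 / 4 + alphaExcess (Nat.count (· ∈ x) n) := by
  simp only [alphaSeq, if_pos hn, alphaExcess]
  congr

lemma alphaSeq_of_notMem {x : Set ℕ} {n : ℕ} (hn : n ∉ x) : alphaSeq x n = 1 / 4 := by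
  simp [alphaSeq, hn]

lemma rho_comm (x y : Set ℕ) : rho x y = rho y x := by
  simp only [rho, ← neg_sub (alphaSeq x _), neg_sq]

lemma rho_le_two_mul_add (x y z : Set ℕ) : rho x z ≤ 2 * rho x y + 2 * rho y z := by
  simp only [rho, ← ENNReal.tsum_mul_left, ← ENNReal.tsum_add]
  refine ENNReal.tsum_le_tsum fun n => ?_
  rw [← ENNReal.ofReal_ofNat 2, ← ENNReal.ofReal_mul zero_le_two, ← ENNReal.ofReal_mul zero_le_two,
    ← ENNReal.ofReal_add (by positivity) (by positivity)]
  exact ENNReal.ofReal_le_ofReal <| by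
    nlinarith [sq_nonneg (alphaSeq x n - 2 * alphaSeq y n + alphaSeq z n)]

lemma tsum_ofReal_sq_sub_succ_le {a : ℕ → ℝ} (ha : Antitone a) (ha₀ : ∀ n, 0 ≤ a n) :
    ∑' n, ENNReal.ofReal ((a n - a (n + 1)) ^ 2) ≤ ENNReal.ofReal (a 0 ^ 2) := by
  refine ENNReal.tsum_le_of_sum_range_le fun N => ?_
  have hstep : ∀ n, 0 ≤ a n - a (n + 1) := fun n => sub_nonneg.2 (ha n.le_succ)
  rw [← ENNReal.ofReal_sum_of_nonneg fun n _ => sq_nonneg _]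
  refine ENNReal.ofReal_le_ofReal ?_
  calc ∑ n ∈ Finset.range N, (a n - a (n + 1)) ^ 2
      ≤ ∑ n ∈ Finset.range N, a 0 * (a n - a (n + 1)) := by
        refine Finset.sum_le_sum fun n _ => ?_
        rw [sq]
        refine mul_le_mul_of_nonneg_right ?_ (hstep n)
        linarith [ha (Nat.zero_le n), ha₀ (n + 1)]
    _ = a 0 * (a 0 - a N) := by rw [← Finset.mul_sum, Finset.sum_range_sub']
    _ ≤ a 0 ^ 2 := by nlinarith [ha₀ 0, ha₀ N]

section Count

variable {s : Set ℕ} {m n : ℕ} [DecidablePred (· ∈ s)] [DecidablePred (· ∈ s \ {m})]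

lemma Nat.count_sdiff_singleton_of_le (hnm : n ≤ m) :
    Nat.count (· ∈ s \ {m}) n = Nat.count (· ∈ s) n := by
  simp only [Nat.count_eq_card_filter_range]
  congr 1
  ext i
  simp only [Finset.mem_filter, Finset.mem_range, Set.mem_sdiff, Set.mem_singleton_iff]
  constructor
  · rintro ⟨hi, his, -⟩; exact ⟨hi, his⟩
  · rintro ⟨hi, his⟩; exact ⟨hi, his, by omega⟩

lemma Nat.count_sdiff_singleton_of_lt (hm : m ∈ s) (hmn : m < n) :
    Nat.count (· ∈ s \ {m}) n = Nat.count (· ∈ s) n - 1 := by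
  simp only [Nat.count_eq_card_filter_range]
  have : (Finset.range n).filter (· ∈ s \ {m}) = ((Finset.range n).filter (· ∈ s)).erase m := by
    ext i
    simp only [Finset.mem_filter, Finset.mem_erase, Finset.mem_range, Set.mem_sdiff,
      Set.mem_singleton_iff]
    tauto
  rw [this, Finset.card_erase_of_mem (Finset.mem_filter.2 ⟨Finset.mem_range.2 hmn, hm⟩)]

end Count

section Enumeration

variable {s : Set ℕ} (hs : s.Infinite)
include hs

lemma fEnum_mem (j : ℕ) : fEnum s j ∈ s := Nat.nth_mem_of_infinite (p := (· ∈ s)) hs j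

lemma fEnum_lt_fEnum {j k : ℕ} : fEnum s j < fEnum s k ↔ j < k := Nat.nth_lt_nth (p := (· ∈ s)) hs

lemma count_fEnum [DecidablePred (· ∈ s)] (j : ℕ) : Nat.count (· ∈ s) (fEnum s j) = j :=
  Nat.count_nth_of_infinite (p := (· ∈ s)) hs j

lemma alphaSeq_fEnum (j : ℕ) : alphaSeq s (fEnum s j) = 1 / 4 + alphaExcess j := by
  classical
  rw [alphaSeq_of_mem (fEnum_mem hs j), count_fEnum hs]

lemma alphaSeq_sdiff_fEnum_of_lt {j k : ℕ} (hjk : j < k) :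
    alphaSeq (s \ {fEnum s k}) (fEnum s j) = 1 / 4 + alphaExcess j := by
  classical
  have hlt : fEnum s j < fEnum s k := (fEnum_lt_fEnum hs).2 hjk
  rw [alphaSeq_of_mem (show fEnum s j ∈ s \ {fEnum s k} from ⟨fEnum_mem hs j, hlt.ne⟩),
    Nat.count_sdiff_singleton_of_le hlt.le, count_fEnum hs]

lemma alphaSeq_sdiff_fEnum_of_gt {j k : ℕ} (hkj : k < j) :
    alphaSeq (s \ {fEnum s k}) (fEnum s j) = 1 / 4 + alphaExcess (j - 1) := by
  classical
  have hlt : fEnum s k < fEnum s j := (fEnum_lt_fEnum hs).2 hkj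
  rw [alphaSeq_of_mem (show fEnum s j ∈ s \ {fEnum s k} from ⟨fEnum_mem hs j, hlt.ne'⟩),
    Nat.count_sdiff_singleton_of_lt (fEnum_mem hs k) hlt, count_fEnum hs]

lemma rho_eq_tsum_fEnum {x y : Set ℕ} (hx : x ⊆ s) (hy : y ⊆ s) :
    rho x y = ∑' j, ENNReal.ofReal
      ((alphaSeq x (fEnum s j) - alphaSeq y (fEnum s j)) ^ 2) := by
  refine ((Nat.nth_injective (p := (· ∈ s)) hs).tsum_eq fun n hn => ?_).symm
  rw [Nat.range_nth_of_infinite (p := (· ∈ s)) hs]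
  by_contra hns
  exact hn (by simp [alphaSeq_of_notMem (hns <| hx ·), alphaSeq_of_notMem (hns <| hy ·)])

lemma rho_sdiff_fEnum_le (k : ℕ) :
    rho s (s \ {fEnum s k}) ≤ ENNReal.ofReal (1 / (2 * ((k : ℝ) + 1))) := by
  set d : ℕ → ℝ≥0∞ := fun j => ENNReal.ofReal
    ((alphaSeq s (fEnum s j) - alphaSeq (s \ {fEnum s k}) (fEnum s j)) ^ 2)
  have hbefore : ∀ j < k, d j = 0 := fun j hj => by
    simp [d, alphaSeq_fEnum hs, alphaSeq_sdiff_fEnum_of_lt hs hj]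
  have hat : d k = ENNReal.ofReal (alphaExcess k ^ 2) := by
    simp [d, alphaSeq_fEnum hs, alphaSeq_of_notMem]
  have hafter : ∀ n, d (n + (k + 1)) =
      ENNReal.ofReal ((alphaExcess (k + n) - alphaExcess (k + n + 1)) ^ 2) := fun n => by
    simp only [d]
    rw [alphaSeq_fEnum hs, alphaSeq_sdiff_fEnum_of_gt hs (by omega),
      show n + (k + 1) - 1 = k + n by omega, show n + (k + 1) = k + n + 1 by omega]
    congr 1
    ring
  have htail : ∑' n, d (n + (k + 1)) ≤ ENNReal.ofReal (alphaExcess k ^ 2) := by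
    simp only [hafter]
    exact tsum_ofReal_sq_sub_succ_le (fun i j hij => alphaExcess_antitone (by omega))
      fun n => alphaExcess_nonneg _
  calc rho s (s \ {fEnum s k})
      = ∑ j ∈ Finset.range (k + 1), d j + ∑' n, d (n + (k + 1)) :=
        (rho_eq_tsum_fEnum hs subset_rfl Set.sdiff_subset).trans
          (Summable.sum_add_tsum_nat_add' ENNReal.summable).symm
    _ ≤ ENNReal.ofReal (alphaExcess k ^ 2) + ENNReal.ofReal (alphaExcess k ^ 2) := by
        rw [Finset.sum_range_succ, Finset.sum_eq_zero fun j hj => hbefore j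
          (Finset.mem_range.1 hj), zero_add, hat]
        gcongr
    _ = ENNReal.ofReal (1 / (2 * ((k : ℝ) + 1))) := by
        rw [← ENNReal.ofReal_add (sq_nonneg _) (sq_nonneg _), alphaExcess_sq]
        congr 1
        field_simp
        ring

end Enumeration

lemma rho_lt_top_trans {x y z : Set ℕ} (hxy : rho x y < ⊤) (hyz : rho y z < ⊤) :
    rho x z < ⊤ :=
  (rho_le_two_mul_add x y z).trans_lt <| by finiteness

/-- In the metric space `(F, √ρ)` no point is isolated: every ball around
`g ∈ F` of positive radius contains a point of `F` different from `g`. -/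
theorem Fset_no_isolated_points :
    ∀ g ∈ Fset, ∀ ε : ℝ, 0 < ε →
      ∃ h ∈ Fset, h ≠ g ∧ Real.sqrt (rho g h).toReal < ε := by
  rintro g ⟨hg, hgF⟩ ε hε
  obtain ⟨k, hk⟩ := exists_nat_one_div_lt (pow_pos hε 2)
  have hclose := rho_sdiff_fEnum_le hg k
  have hfin : rho g (g \ {fEnum g k}) < ⊤ := hclose.trans_lt ENNReal.ofReal_lt_top
  refine ⟨g \ {fEnum g k}, ⟨hg.sdiff (finite_singleton _), ?_⟩, ?_, ?_⟩
  · exact rho_lt_top_trans (rho_comm g _ ▸ hfin) hgF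
  · exact fun h => (h.symm.subset (fEnum_mem hg k)).2 rfl
  · rw [Real.sqrt_lt' hε]
    calc (rho g (g \ {fEnum g k})).toReal ≤ 1 / (2 * ((k : ℝ) + 1)) :=
          ENNReal.toReal_le_of_le_ofReal (by positivity) hclose
      _ < ε ^ 2 := by
          refine lt_of_le_of_lt ?_ hk
          gcongr
          linarith

end
end

section
/- Let R be an analytic symmetric binary relation on a Polish space X, let η : 2^ω → X be continuous, and let P ⊆ 2^ω be a nonempty perfect set. Then there is a nonempty perfect set Q ⊆ P such that either η(Q) is R-complete (any two distinct elements of η(Q) are R-related) or η(Q) is R-discrete (no two distinct elements of η(Q) are R-related). -/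
/-!
Analytic sets have the Baire property. For `s = f '' (ℕ → ℕ)`, let `D l` be the closed set of
points near which the image of the cylinder `[l]` is nonmeagre. Each `D l \ ⋃ n, D (n :: l)` is
meagre, and every point of `D []` outside all of them is the limit of images of a branch, hence
lies in `s`; so `s` differs from the closed set `D []` by a meagre set.

Pulling `R` back along `η ∘ f`, where `f` embeds the Cantor space onto a subset of `P`, gives a
Baire measurable relation `S` on `2^ω`, which agrees with an open set `O` on a comeagre set `G`.
A fusion argument builds a tree of cylinders such that any two distinct branches converge to a pair
in `G` (Mycielski), and such that the product of the two children of each node lies inside `O` or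
is disjoint from it. Whether `S` holds between two branches is then decided by their splitting
node alone, and a perfect subtree on which this decision is constant gives `Q` (Galvin).
-/

open Set Filter Topology Function PiNat

section NonmeagreLocus

variable {X : Type*} [TopologicalSpace X] {s t : Set X}

lemma IsClosed.baireMeasurableSet (hs : IsClosed s) : BaireMeasurableSet s :=
  hs.isOpen_compl.baireMeasurableSet.of_compl

def nonmeagreLocus (s : Set X) : Set X := {x | ∀ U ∈ 𝓝 x, ¬IsMeagre (s ∩ U)}

lemma isClosed_nonmeagreLocus (s : Set X) : IsClosed (nonmeagreLocus s) := by
  rw [← isOpen_compl_iff, isOpen_iff_mem_nhds]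
  intro x hx
  simp only [nonmeagreLocus, mem_compl_iff, mem_ofPred_eq, not_forall, not_not] at hx
  obtain ⟨U, hU, hmeagre⟩ := hx
  filter_upwards [eventually_mem_nhds_iff.2 hU] with y hy
  exact fun h => h U hy hmeagre

lemma nonmeagreLocus_subset_closure (s : Set X) : nonmeagreLocus s ⊆ closure s :=
  fun _ hx => mem_closure_iff_nhds.2 fun U hU => inter_comm s U ▸ nonempty_of_not_isMeagre (hx U hU)

lemma isMeagre_diff_nonmeagreLocus [SecondCountableTopology X] (s : Set X) :
    IsMeagre (s \ nonmeagreLocus s) := by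
  obtain ⟨T, hTc, hT⟩ := TopologicalSpace.isOpen_iUnion_countable
    (fun U : {U : Set X // IsOpen U ∧ IsMeagre (s ∩ U)} => U.1) fun U => U.2.1
  refine (isMeagre_biUnion hTc fun U _ => U.2.2).mono fun x ⟨hxs, hx⟩ => ?_
  simp only [nonmeagreLocus, mem_ofPred_eq, not_forall, not_not] at hx
  obtain ⟨U, hU, hmeagre⟩ := hx
  obtain ⟨V, hVU, hV, hxV⟩ := mem_nhds_iff.1 hU
  have hx : x ∈ ⋃ U : {U : Set X // IsOpen U ∧ IsMeagre (s ∩ U)}, U.1 :=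
    mem_iUnion.2 ⟨⟨V, hV, hmeagre.mono (inter_subset_inter_right s hVU)⟩, hxV⟩
  rw [← hT] at hx
  obtain ⟨W, hW, hxW⟩ := mem_iUnion₂.1 hx
  exact mem_iUnion₂.2 ⟨W, hW, hxs, hxW⟩

lemma isMeagre_diff_of_residualEq {s t : Set X} (h : s =ᵇ t) : IsMeagre (s \ t) := by
  filter_upwards [h.mem_iff] with x hx hxst
  exact hxst.2 (hx.1 hxst.1)

lemma isMeagre_nonmeagreLocus_diff (hst : s ⊆ t) (ht : BaireMeasurableSet t) :
    IsMeagre (nonmeagreLocus s \ t) := by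
  have hE : BaireMeasurableSet (nonmeagreLocus s \ t) :=
    ((isClosed_nonmeagreLocus s).baireMeasurableSet).diff ht
  obtain ⟨O, hO, hEO⟩ := hE.residualEq_isOpen
  by_contra hE'
  obtain ⟨x, ⟨hxs, -⟩, hxO⟩ : ((nonmeagreLocus s \ t) ∩ O).Nonempty := by
    refine nonempty_of_not_isMeagre fun h => hE' ?_
    exact ((isMeagre_diff_of_residualEq hEO).union h).mono fun x hx => by
      by_cases hxO : x ∈ O
      exacts [Or.inr ⟨hx, hxO⟩, Or.inl ⟨hx, hxO⟩]
  refine hxs O (hO.mem_nhds hxO) ((isMeagre_diff_of_residualEq hEO.symm).mono ?_)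
  exact fun y ⟨hys, hyO⟩ => ⟨hyO, fun hy => hy.2 (hst hys)⟩

lemma isMeagre_nonmeagreLocus_diff_iUnion [SecondCountableTopology X] {ι : Type*} [Countable ι]
    {t : ι → Set X} (hst : s ⊆ ⋃ i, t i) :
    IsMeagre (nonmeagreLocus s \ ⋃ i, nonmeagreLocus (t i)) := by
  set N := ⋃ i, t i \ nonmeagreLocus (t i)
  have hN : IsMeagre N := isMeagre_iUnion fun i => isMeagre_diff_nonmeagreLocus (t i)
  have hC : BaireMeasurableSet ((⋃ i, nonmeagreLocus (t i)) ∪ N) :=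
    (BaireMeasurableSet.iUnion fun i => (isClosed_nonmeagreLocus _).baireMeasurableSet).union
      hN.baireMeasurableSet
  have hsC : s ⊆ (⋃ i, nonmeagreLocus (t i)) ∪ N := by
    intro x hx
    obtain ⟨i, hi⟩ := mem_iUnion.1 (hst hx)
    by_cases hxi : x ∈ nonmeagreLocus (t i)
    exacts [Or.inl (mem_iUnion.2 ⟨i, hxi⟩), Or.inr (mem_iUnion.2 ⟨i, hi, hxi⟩)]
  refine ((isMeagre_nonmeagreLocus_diff hsC hC).union hN).mono fun x ⟨hxs, hx⟩ => ?_
  by_cases hxN : x ∈ N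
  exacts [Or.inr hxN, Or.inl ⟨hxs, fun h => h.elim hx hxN⟩]

end NonmeagreLocus

lemma exists_antitone_isOpen_dense_of_mem_residual {X : Type*} [TopologicalSpace X] [BaireSpace X]
    {s : Set X} (hs : s ∈ residual X) :
    ∃ W : ℕ → Set X, (∀ n, IsOpen (W n)) ∧ (∀ n, Dense (W n)) ∧ Antitone W ∧ ⋂ n, W n ⊆ s := by
  obtain ⟨t, hts, htG, htd⟩ := mem_residual.1 hs
  obtain ⟨U, hU, rfl⟩ := htG.eq_iInter_nat
  refine ⟨fun n => ⋂ k ∈ Iic n, U k, fun n => (finite_Iic n).isOpen_biInter fun k _ => hU k,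
    fun n => htd.mono (subset_iInter₂ fun k _ => iInter_subset U k),
    fun m n hmn => biInter_subset_biInter_left (Iic_subset_Iic.2 hmn), fun x hx => hts ?_⟩
  exact mem_iInter.2 fun k => mem_iInter₂.1 (mem_iInter.1 hx k) k (mem_Iic.2 le_rfl)

lemma perfect_range_of_continuous_injective {X Y : Type*} [TopologicalSpace X] [CompactSpace X]
    [PerfectSpace X] [TopologicalSpace Y] [T2Space Y] {f : X → Y} (hf : Continuous f)
    (hinj : Injective f) : Perfect (range f) := by
  refine ⟨(isCompact_range hf).isClosed, preperfect_iff_nhds.2 ?_⟩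
  rintro _ ⟨x, rfl⟩ U hU
  obtain ⟨y, hy, hyx⟩ := preperfect_iff_nhds.1 PerfectSpace.univ_preperfect x (mem_univ x)
    (f ⁻¹' U) (hf.continuousAt hU)
  exact ⟨f y, ⟨hy.1, mem_range_self y⟩, hinj.ne hyx⟩

lemma exists_suffix_extension_forall_pairs {ι β : Type*} {Φ : List β → List β → Prop}
    (hmono : ∀ ⦃a b a' b'⦄, a <:+ a' → b <:+ b' → Φ a b → Φ a' b')
    (hdense : ∀ a b, ∃ a' b', a <:+ a' ∧ b <:+ b' ∧ Φ a' b') {T : Set (ι × ι)} (hT : T.Finite)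
    (hdiag : ∀ p ∈ T, p.1 ≠ p.2) (σ : ι → List β) :
    ∃ σ' : ι → List β, (∀ i, σ i <:+ σ' i) ∧ ∀ p ∈ T, Φ (σ' p.1) (σ' p.2) := by
  classical
  induction T, hT using Set.Finite.induction_on with
  | empty => exact ⟨σ, fun i => List.suffix_refl _, by simp⟩
  | @insert p T _ _ ih =>
    obtain ⟨σ₁, hσ₁, hT⟩ := ih fun q hq => hdiag q (mem_insert_of_mem _ hq)
    have hp : p.1 ≠ p.2 := hdiag p (mem_insert _ _)
    obtain ⟨a, b, ha, hb, hab⟩ := hdense (σ₁ p.1) (σ₁ p.2)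
    set σ' := update (update σ₁ p.1 a) p.2 b
    have hσ' : ∀ i, σ₁ i <:+ σ' i := fun i => by
      by_cases h2 : i = p.2
      · subst h2; simpa [σ'] using hb
      by_cases h1 : i = p.1
      · subst h1; simpa [σ', h2] using ha
      simp [σ', h1, h2]
    refine ⟨σ', fun i => (hσ₁ i).trans (hσ' i), ?_⟩
    rintro q (rfl | hq)
    · simpa [σ', hp] using hab
    · exact hmono (hσ' _) (hσ' _) (hT q hq)

namespace PiNat

variable {α : Type*}

/-- Lists are read backwards, as in `PiNat.res`: `a :: l` is a child of `l`, and `l <:+ l'` means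
that `l'` extends `l`. -/
def resCylinder (l : List α) : Set (ℕ → α) := {z | res z l.length = l}

@[simp]
lemma mem_resCylinder {l : List α} {z : ℕ → α} : z ∈ resCylinder l ↔ res z l.length = l :=
  Iff.rfl

lemma mem_resCylinder_res (z : ℕ → α) (n : ℕ) : z ∈ resCylinder (res z n) := by
  simp

lemma resCylinder_res (z : ℕ → α) (n : ℕ) : resCylinder (res z n) = cylinder z n := by
  ext y
  simp [cylinder_eq_res]

lemma resCylinder_nil : resCylinder ([] : List α) = univ := by
  ext z
  simp

lemma res_suffix_res (z : ℕ → α) {m n : ℕ} (h : m ≤ n) : res z m <:+ res z n := by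
  induction n, h using Nat.le_induction with
  | base => exact List.suffix_refl _
  | succ n _ ih => exact ih.trans (List.suffix_cons _ _)

lemma suffix_res_of_mem_resCylinder {l : List α} {z : ℕ → α} (hz : z ∈ resCylinder l) {n : ℕ}
    (hn : l.length ≤ n) : l <:+ res z n :=
  hz ▸ res_suffix_res z hn

lemma resCylinder_anti {l l' : List α} (h : l <:+ l') : resCylinder l' ⊆ resCylinder l := by
  intro z hz
  have hsuf : res z l.length <:+ l' := hz ▸ res_suffix_res z h.length_le
  exact ((List.suffix_of_suffix_length_le h hsuf (by simp)).eq_of_length (by simp)).symm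

lemma resCylinder_eq_iUnion_cons (l : List α) : resCylinder l = ⋃ a, resCylinder (a :: l) := by
  ext z
  simp only [mem_resCylinder, mem_iUnion, List.length_cons, res_succ, List.cons.injEq]
  exact ⟨fun h => ⟨_, rfl, h⟩, fun ⟨_, _, h⟩ => h⟩

lemma disjoint_resCylinder {l l' : List α} (hlen : l.length = l'.length) (hne : l ≠ l') :
    Disjoint (resCylinder l) (resCylinder l') :=
  disjoint_left.2 fun _ hz hz' => hne (hz.symm.trans (hlen ▸ hz'))

lemma resCylinder_nonempty [Nonempty α] (l : List α) : (resCylinder l).Nonempty := by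
  induction l with
  | nil => simp [resCylinder_nil]
  | cons a l ih =>
    obtain ⟨z, hz⟩ := ih
    refine ⟨update z l.length a, ?_⟩
    have hres : res (update z l.length a) l.length = res z l.length :=
      res_eq_res.2 fun m hm => update_of_ne hm.ne _ _
    simp_all

variable [TopologicalSpace α] [DiscreteTopology α]

lemma isClopen_resCylinder (l : List α) : IsClopen (resCylinder l) := by
  have key : ∀ z, ∀ y ∈ cylinder z l.length, y ∈ resCylinder l ↔ z ∈ resCylinder l :=
    fun z y hy => by
      rw [cylinder_eq_res, mem_ofPred_eq] at hy
      rw [mem_resCylinder, mem_resCylinder, hy]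
  refine ⟨isOpen_compl_iff.1 (isOpen_iff_forall_mem_open.2 fun z hz => ?_),
    isOpen_iff_forall_mem_open.2 fun z hz => ?_⟩
  · exact ⟨_, fun y hy => (key z y hy).not.2 hz, isOpen_cylinder _ _ _, self_mem_cylinder _ _⟩
  · exact ⟨_, fun y hy => (key z y hy).2 hz, isOpen_cylinder _ _ _, self_mem_cylinder _ _⟩

lemma eventually_resCylinder_res_subset {z : ℕ → α} {U : Set (ℕ → α)} (hU : U ∈ 𝓝 z) :
    ∀ᶠ n in atTop, resCylinder (res z n) ⊆ U := by
  obtain ⟨_, ⟨x, n, rfl⟩, hz, hsub⟩ := (isTopologicalBasis_cylinders _).mem_nhds_iff.1 hU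
  filter_upwards [eventually_ge_atTop n] with m hm
  refine (resCylinder_res z m ▸ cylinder_anti z hm).trans ?_
  rwa [mem_cylinder_iff_eq.1 hz]

instance perfectSpace [Nontrivial α] : PerfectSpace (ℕ → α) := by
  refine ⟨preperfect_iff_nhds.2 fun x _ U hU => ?_⟩
  obtain ⟨n, hn⟩ := (eventually_resCylinder_res_subset hU).exists
  obtain ⟨a, ha⟩ := exists_ne (x n)
  refine ⟨update x n a, ⟨hn ?_, mem_univ _⟩, fun h => ha (by simpa using congrFun h n)⟩
  simpa using res_eq_res.2 fun m hm => update_of_ne hm.ne _ _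

lemma exists_resCylinder_prod_subset {U : Set ((ℕ → α) × (ℕ → α))} (hU : IsOpen U) {a b : List α}
    (h : (resCylinder a ×ˢ resCylinder b ∩ U).Nonempty) :
    ∃ a' b', a <:+ a' ∧ b <:+ b' ∧ resCylinder a' ×ˢ resCylinder b' ⊆ U := by
  obtain ⟨⟨x, y⟩, ⟨hx, hy⟩, hxy⟩ := h
  obtain ⟨u, hu, v, hv, huv⟩ := mem_nhds_prod_iff.1 (hU.mem_nhds hxy)
  obtain ⟨n, hxn, hyn, han, hbn⟩ := ((eventually_resCylinder_res_subset hu).and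
    ((eventually_resCylinder_res_subset hv).and
    ((eventually_ge_atTop a.length).and (eventually_ge_atTop b.length)))).exists
  exact ⟨res x n, res y n, suffix_res_of_mem_resCylinder hx han,
    suffix_res_of_mem_resCylinder hy hbn, (prod_mono hxn hyn).trans huv⟩

lemma exists_resCylinder_prod_subset_and_subset_or_disjoint [Nonempty α]
    {W O : Set ((ℕ → α) × (ℕ → α))} (hW : IsOpen W) (hWd : Dense W) (hO : IsOpen O) (a b : List α) :
    ∃ a' b', a <:+ a' ∧ b <:+ b' ∧ resCylinder a' ×ˢ resCylinder b' ⊆ W ∧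
      (resCylinder a' ×ˢ resCylinder b' ⊆ O ∨ Disjoint (resCylinder a' ×ˢ resCylinder b') O) := by
  by_cases hWO : (resCylinder a ×ˢ resCylinder b ∩ (W ∩ O)).Nonempty
  · obtain ⟨a', b', ha, hb, h⟩ := exists_resCylinder_prod_subset (hW.inter hO) hWO
    exact ⟨a', b', ha, hb, h.trans inter_subset_left, Or.inl (h.trans inter_subset_right)⟩
  · have hbox := ((isClopen_resCylinder a).isOpen.prod (isClopen_resCylinder b).isOpen)
    obtain ⟨a', b', ha, hb, h⟩ := exists_resCylinder_prod_subset hW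
      (hWd.inter_open_nonempty _ hbox ((resCylinder_nonempty a).prod (resCylinder_nonempty b)))
    refine ⟨a', b', ha, hb, h, Or.inr (disjoint_left.2 fun p hp hpO => hWO ?_)⟩
    exact ⟨p, ⟨resCylinder_anti ha hp.1, resCylinder_anti hb hp.2⟩, h hp, hpO⟩

end PiNat

lemma eq_of_forall_mem_closure_image_resCylinder {X α : Type*} [TopologicalSpace X] [T2Space X]
    [TopologicalSpace α] [DiscreteTopology α] {f : (ℕ → α) → X} (hf : Continuous f)
    {x : X} {y : ℕ → α} (h : ∀ n, x ∈ closure (f '' resCylinder (res y n))) : x = f y := by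
  have hcluster : ClusterPt x (map f (𝓝 y)) := by
    refine clusterPt_iff_forall_mem_closure.2 fun U hU => ?_
    obtain ⟨n, hn⟩ := (eventually_resCylinder_res_subset hU).exists
    exact closure_mono (image_subset_iff.2 hn) (h n)
  exact eq_of_nhds_neBot (hcluster.mono (hf.tendsto y))

lemma mem_range_of_forall_exists_cons {X α : Type*} [TopologicalSpace X] [T2Space X]
    [TopologicalSpace α] [DiscreteTopology α] {f : (ℕ → α) → X} (hf : Continuous f)
    {x : X} {P : List α → Prop} (hP : ∀ l, P l → x ∈ closure (f '' resCylinder l))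
    (h0 : P []) (hstep : ∀ l, P l → ∃ a, P (a :: l)) : x ∈ range f := by
  have : Nonempty α := let ⟨a, _⟩ := hstep [] h0; ⟨a⟩
  choose! next hnext using hstep
  let L : ℕ → List α := fun k => Nat.rec [] (fun _ l => next l :: l) k
  have hL : ∀ k, P (L k) := fun k => by
    induction k with
    | zero => exact h0
    | succ k ih => exact hnext _ ih
  have hres : ∀ k, res (fun k => next (L k)) k = L k := fun k => by
    induction k with
    | zero => rfl
    | succ k ih => simp only [res_succ, ih]; rfl
  exact ⟨_, (eq_of_forall_mem_closure_image_resCylinder hf fun k => hres k ▸ hP _ (hL k)).symm⟩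

theorem MeasureTheory.AnalyticSet.baireMeasurableSet {X : Type*} [TopologicalSpace X]
    [SecondCountableTopology X] [T2Space X] {s : Set X} (hs : AnalyticSet s) :
    BaireMeasurableSet s := by
  rw [AnalyticSet] at hs
  obtain rfl | ⟨f, hf, rfl⟩ := hs
  · exact isOpen_empty.baireMeasurableSet
  set D : List ℕ → Set X := fun l => nonmeagreLocus (f '' resCylinder l)
  have hM : IsMeagre (⋃ l, D l \ ⋃ n, D (n :: l)) := isMeagre_iUnion fun l =>
    isMeagre_nonmeagreLocus_diff_iUnion (by rw [resCylinder_eq_iUnion_cons, image_iUnion])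
  have hD : D [] \ (⋃ l, D l \ ⋃ n, D (n :: l)) ⊆ range f := fun x ⟨hx0, hx⟩ =>
    mem_range_of_forall_exists_cons hf (fun l hl => nonmeagreLocus_subset_closure _ hl) hx0
      fun l hl => mem_iUnion.1 (not_not.1 fun h => hx (mem_iUnion.2 ⟨l, hl, h⟩))
  have hrange : IsMeagre (range f \ D []) := by
    simpa [D, resCylinder_nil] using isMeagre_diff_nonmeagreLocus (range f)
  have heq : range f = (D [] \ (D [] \ range f)) ∪ (range f \ D []) := by
    ext x; by_cases x ∈ D [] <;> by_cases x ∈ range f <;> simp_all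
  rw [heq]
  exact ((isClosed_nonmeagreLocus _).baireMeasurableSet.diff
    (hM.mono (sdiff_subset_comm.1 hD)).baireMeasurableSet).union hrange.baireMeasurableSet

namespace PiNat

variable {α : Type*}

def IsTreeEmbedding (τ : List α → List α) : Prop :=
  ∀ l a, a :: τ l <:+ τ (a :: l)

lemma IsTreeEmbedding.length_le {τ : List α → List α} (hτ : IsTreeEmbedding τ) (l : List α) :
    l.length ≤ (τ l).length := by
  induction l with
  | nil => exact Nat.zero_le _
  | cons a l ih => simpa using (Nat.succ_le_succ ih).trans (hτ l a).length_le

section CantorScheme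

attribute [local instance] PiNat.metricSpace

variable [TopologicalSpace α] [DiscreteTopology α]

lemma ediam_resCylinder_le (l : List α) :
    Metric.ediam (resCylinder l) ≤ ENNReal.ofReal ((1 / 2) ^ l.length) := by
  refine Metric.ediam_le fun y hy z hz => ?_
  rw [edist_dist]
  refine ENNReal.ofReal_le_ofReal (mem_cylinder_iff_dist_le.1 ?_)
  rw [cylinder_eq_res, mem_ofPred_eq, mem_resCylinder.1 hy, mem_resCylinder.1 hz]

lemma IsTreeEmbedding.exists_continuous_injective [Nonempty α] {τ : List α → List α}
    (hτ : IsTreeEmbedding τ) : ∃ F : (ℕ → α) → (ℕ → α), Continuous F ∧ Injective F ∧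
      ∀ l x, x ∈ resCylinder l → F x ∈ resCylinder (τ l) := by
  have : CompleteSpace (ℕ → α) := PiNat.completeSpace
  set A : List α → Set (ℕ → α) := fun l => resCylinder (τ l)
  have hanti : CantorScheme.ClosureAntitone A :=
    CantorScheme.Antitone.closureAntitone
      (fun l a => resCylinder_anti ((List.suffix_cons _ _).trans (hτ l a)))
      fun l => (isClopen_resCylinder _).isClosed
  have hdisj : CantorScheme.Disjoint A := fun l a b hab =>
    (disjoint_resCylinder (by simp) (by simpa)).mono (resCylinder_anti (hτ l a))
      (resCylinder_anti (hτ l b))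
  have hdiam : CantorScheme.VanishingDiam A := by
    intro x
    have hlim : Tendsto (fun n : ℕ => ENNReal.ofReal ((1 / 2 : ℝ) ^ n)) atTop (𝓝 0) := by
      simpa using ENNReal.tendsto_ofReal (tendsto_pow_atTop_nhds_zero_of_lt_one
        (by norm_num : (0 : ℝ) ≤ 1 / 2) (by norm_num))
    refine tendsto_of_tendsto_of_tendsto_of_le_of_le tendsto_const_nhds hlim (fun _ => zero_le)
      fun n => (ediam_resCylinder_le _).trans (ENNReal.ofReal_le_ofReal ?_)
    simpa using pow_le_pow_of_le_one (by norm_num : (0 : ℝ) ≤ 1 / 2) (by norm_num)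
      (hτ.length_le (res x n))
  have hdom := hanti.map_of_vanishingDiam hdiam fun l => resCylinder_nonempty _
  refine ⟨fun x => (CantorScheme.inducedMap A).2 ⟨x, hdom ▸ mem_univ x⟩,
    hdiam.map_continuous.comp (by fun_prop), fun x y h => congrArg Subtype.val
      (hdisj.map_injective h), fun l x hx => ?_⟩
  exact hx ▸ CantorScheme.map_mem ⟨x, _⟩ l.length

end CantorScheme

lemma exists_isTreeEmbedding_forall_pairs [Finite α] {Φ : ℕ → List α → List α → Prop}
    (hmono : ∀ n ⦃a b a' b'⦄, a <:+ a' → b <:+ b' → Φ n a b → Φ n a' b')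
    (hdense : ∀ n a b, ∃ a' b', a <:+ a' ∧ b <:+ b' ∧ Φ n a' b') :
    ∃ τ, IsTreeEmbedding τ ∧
      ∀ n s t, s.length = n + 1 → t.length = n + 1 → s ≠ t → Φ n (τ s) (τ t) := by
  have hstep : ∀ n (σ : List α → List α), ∃ σ' : List α → List α,
      (∀ l a, a :: σ l <:+ σ' (a :: l)) ∧
      ∀ s t, s.length = n + 1 → t.length = n + 1 → s ≠ t → Φ n (σ' s) (σ' t) := by
    intro n σ
    have hT : {p : List α × List α | p.1.length = n + 1 ∧ p.2.length = n + 1 ∧ p.1 ≠ p.2}.Finite :=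
      ((List.finite_length_eq α (n + 1)).prod (List.finite_length_eq α (n + 1))).subset
        fun p hp => ⟨hp.1, hp.2.1⟩
    obtain ⟨σ', hσ', hpairs⟩ := exists_suffix_extension_forall_pairs (hmono n) (hdense n) hT
      (fun p hp => hp.2.2) fun s => match s with
        | [] => []
        | a :: l => a :: σ l
    exact ⟨σ', fun l a => hσ' (a :: l), fun s t hs ht hst => hpairs (s, t) ⟨hs, ht, hst⟩⟩
  choose step hstep_child hstep_pairs using hstep
  -- `Ψ n` is only ever evaluated on lists of length `n`.
  let Ψ : ℕ → List α → List α := fun n => Nat.rec (fun _ => []) (fun k σ => step k σ) n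
  refine ⟨fun l => Ψ l.length l, fun l a => hstep_child _ _ l a, fun n s t hs ht hst => ?_⟩
  simp only [hs, ht]
  exact hstep_pairs n (Ψ n) s t hs ht hst

lemma exists_isTreeEmbedding_forall_mem {N : Set (List α)} {u : List α}
    (h : ∀ v, u <:+ v → ∃ w, v <:+ w ∧ w ∈ N) : ∃ e, IsTreeEmbedding e ∧ ∀ l, e l ∈ N := by
  choose! pick hpick hpickN using h
  let e : List α → List α := fun l => l.rec (pick u) fun a _ el => pick (a :: el)
  have hu : ∀ l, u <:+ e l := fun l => by
    induction l with
    | nil => exact hpick u (List.suffix_refl u)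
    | cons a l ih =>
      have hul : u <:+ a :: e l := ih.trans (List.suffix_cons _ _)
      exact hul.trans (hpick _ hul)
  refine ⟨e, fun l a => hpick _ ((hu l).trans (List.suffix_cons _ _)), fun l => ?_⟩
  cases l with
  | nil => exact hpickN u (List.suffix_refl u)
  | cons a l => exact hpickN _ ((hu l).trans (List.suffix_cons _ _))

lemma exists_isTreeEmbedding_monochromatic (P : List α → Prop) :
    ∃ e, IsTreeEmbedding e ∧ ((∀ l, P (e l)) ∨ ∀ l, ¬P (e l)) := by
  by_cases h : ∃ u, ∀ v, u <:+ v → ∃ w, v <:+ w ∧ P w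
  · obtain ⟨u, hu⟩ := h
    obtain ⟨e, he, hP⟩ := exists_isTreeEmbedding_forall_mem (N := {w | P w}) hu
    exact ⟨e, he, Or.inl hP⟩
  · push Not at h
    obtain ⟨v, -, hv⟩ := h []
    obtain ⟨e, he, hP⟩ := exists_isTreeEmbedding_forall_mem (N := {w | ¬P w}) (u := v)
      fun w hw => ⟨w, List.suffix_refl w, hv w hw⟩
    exact ⟨e, he, Or.inr hP⟩

theorem exists_continuous_injective_forall_split_mem_iff {S : Set ((ℕ → Bool) × (ℕ → Bool))}
    (hS : BaireMeasurableSet S) : ∃ (F : (ℕ → Bool) → (ℕ → Bool)) (P : List Bool → Prop),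
      Continuous F ∧ Injective F ∧ ∀ l x y, x ∈ resCylinder (false :: l) →
        y ∈ resCylinder (true :: l) → ((F x, F y) ∈ S ↔ P l) := by
  obtain ⟨O, hO, hSO⟩ := hS.residualEq_isOpen
  obtain ⟨W, hWo, hWd, hWanti, hWS⟩ := exists_antitone_isOpen_dense_of_mem_residual hSO.mem_iff
  obtain ⟨τ, hτ, hΦ⟩ := exists_isTreeEmbedding_forall_pairs
    (Φ := fun n a b => resCylinder a ×ˢ resCylinder b ⊆ W n ∧
      (resCylinder a ×ˢ resCylinder b ⊆ O ∨ Disjoint (resCylinder a ×ˢ resCylinder b) O))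
    (fun n a b a' b' ha hb ⟨hW, hO⟩ => by
      have hsub := prod_mono (resCylinder_anti ha) (resCylinder_anti hb)
      exact ⟨hsub.trans hW, hO.imp hsub.trans (Disjoint.mono_left hsub)⟩)
    fun n => exists_resCylinder_prod_subset_and_subset_or_disjoint (hWo n) (hWd n) hO
  obtain ⟨F, hFc, hFi, hFτ⟩ := hτ.exists_continuous_injective
  refine ⟨F, fun l => resCylinder (τ (false :: l)) ×ˢ resCylinder (τ (true :: l)) ⊆ O, hFc, hFi,
    fun l x y hx hy => ?_⟩
  have hW : ∀ n, (F x, F y) ∈ W n := fun n => by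
    have hne : res x (max n l.length + 1) ≠ res y (max n l.length + 1) := fun h => by
      have hsuf := suffix_res_of_mem_resCylinder hx (Nat.succ_le_succ (le_max_right n l.length))
      refine disjoint_left.1 (disjoint_resCylinder (l := false :: l) (l' := true :: l) rfl
        (by simp)) (resCylinder_anti hsuf ?_) hy
      rw [h]
      exact mem_resCylinder_res y _
    exact hWanti (le_max_left n l.length) ((hΦ _ _ _ (by simp) (by simp) hne).1
      ⟨hFτ _ _ (mem_resCylinder_res x _), hFτ _ _ (mem_resCylinder_res y _)⟩)
  have hbox : (F x, F y) ∈ resCylinder (τ (false :: l)) ×ˢ resCylinder (τ (true :: l)) :=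
    ⟨hFτ _ _ hx, hFτ _ _ hy⟩
  rw [show (F x, F y) ∈ S ↔ (F x, F y) ∈ O from hWS (mem_iInter.2 hW)]
  rcases (hΦ l.length (false :: l) (true :: l) rfl rfl (by simp)).2 with hO | hdisj
  · exact iff_of_true (hO hbox) hO
  · exact iff_of_false (disjoint_left.1 hdisj hbox) fun h => disjoint_left.1 hdisj hbox (h hbox)

theorem exists_continuous_injective_forall_split_mem_iff_const
    {S : Set ((ℕ → Bool) × (ℕ → Bool))} (hS : BaireMeasurableSet S) :
    ∃ F : (ℕ → Bool) → (ℕ → Bool), Continuous F ∧ Injective F ∧ ∃ c : Prop, ∀ l x y,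
      x ∈ resCylinder (false :: l) → y ∈ resCylinder (true :: l) → ((F x, F y) ∈ S ↔ c) := by
  obtain ⟨F, P, hFc, hFi, hF⟩ := exists_continuous_injective_forall_split_mem_iff hS
  obtain ⟨e, he, hPe⟩ := exists_isTreeEmbedding_monochromatic P
  obtain ⟨E, hEc, hEi, hEe⟩ := he.exists_continuous_injective
  have hsplit : ∀ l x y, x ∈ resCylinder (false :: l) → y ∈ resCylinder (true :: l) →
      ((F (E x), F (E y)) ∈ S ↔ P (e l)) := fun l x y hx hy =>
    hF (e l) _ _ (resCylinder_anti (he l false) (hEe _ _ hx))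
      (resCylinder_anti (he l true) (hEe _ _ hy))
  refine ⟨F ∘ E, hFc.comp hEc, hFi.comp hEi, ?_⟩
  rcases hPe with h | h
  · exact ⟨True, fun l x y hx hy => iff_true_intro ((hsplit l x y hx hy).2 (h l))⟩
  · exact ⟨False, fun l x y hx hy => iff_false_intro (mt (hsplit l x y hx hy).1 (h l))⟩

lemma exists_split_of_ne {x y : ℕ → Bool} (h : x ≠ y) : ∃ l,
    (x ∈ resCylinder (false :: l) ∧ y ∈ resCylinder (true :: l)) ∨
      (y ∈ resCylinder (false :: l) ∧ x ∈ resCylinder (true :: l)) := by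
  have hres : res y (firstDiff x y) = res x (firstDiff x y) :=
    res_eq_res.2 fun m hm => (apply_eq_of_lt_firstDiff hm).symm
  have hx := mem_resCylinder_res x (firstDiff x y + 1)
  have hy := mem_resCylinder_res y (firstDiff x y + 1)
  rw [res_succ] at hx hy
  rw [hres] at hy
  refine ⟨res x (firstDiff x y), ?_⟩
  have hne := apply_firstDiff_ne h
  cases hxk : x (firstDiff x y) <;> cases hyk : y (firstDiff x y) <;> simp_all

theorem exists_continuous_injective_forall_ne_mem_iff {S : Set ((ℕ → Bool) × (ℕ → Bool))}
    (hS : BaireMeasurableSet S) (hsymm : ∀ x y, (x, y) ∈ S → (y, x) ∈ S) :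
    ∃ F : (ℕ → Bool) → (ℕ → Bool), Continuous F ∧ Injective F ∧
      ∃ c : Prop, ∀ x y, x ≠ y → ((F x, F y) ∈ S ↔ c) := by
  obtain ⟨F, hFc, hFi, c, hF⟩ := exists_continuous_injective_forall_split_mem_iff_const hS
  refine ⟨F, hFc, hFi, c, fun x y hxy => ?_⟩
  obtain ⟨l, ⟨hx, hy⟩ | ⟨hy, hx⟩⟩ := exists_split_of_ne hxy
  · exact hF l x y hx hy
  · exact ⟨fun h => (hF l y x hy hx).1 (hsymm _ _ h), fun h => hsymm _ _ ((hF l y x hy hx).2 h)⟩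

end PiNat

/-- (Galvin dichotomy, Corollary of Galvin's Ramsey theorem.) Let `R` be an
analytic symmetric binary relation on a Polish space `X`, let `η : 2^ω → X` be
continuous and let `P ⊆ 2^ω` be nonempty and perfect. Then there is a nonempty
perfect `Q ⊆ P` such that `η(Q)` is either `R`-complete or `R`-discrete. -/
theorem galvin_dichotomy {X : Type*} [TopologicalSpace X] [PolishSpace X]
    (R : Set (X × X)) (hR : MeasureTheory.AnalyticSet R)
    (hsym : ∀ a b : X, (a, b) ∈ R → (b, a) ∈ R)
    (η : (ℕ → Bool) → X) (hη : Continuous η)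
    (P : Set (ℕ → Bool)) (hP : Perfect P) (hPne : P.Nonempty) :
    ∃ Q, Q ⊆ P ∧ Perfect Q ∧ Q.Nonempty ∧
      ((∀ a ∈ η '' Q, ∀ b ∈ η '' Q, a ≠ b → (a, b) ∈ R) ∨
       (∀ a ∈ η '' Q, ∀ b ∈ η '' Q, a ≠ b → (a, b) ∉ R)) := by
  obtain ⟨f, hfP, hfc, hfi⟩ : ∃ f : (ℕ → Bool) → (ℕ → Bool),
      range f ⊆ P ∧ Continuous f ∧ Injective f := by
    let := TopologicalSpace.upgradeIsCompletelyMetrizable (ℕ → Bool)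
    exact hP.exists_nat_bool_injection hPne
  have : PolishSpace ((ℕ → Bool) × (ℕ → Bool)) := {}
  have hS : BaireMeasurableSet
      ((fun p : (ℕ → Bool) × (ℕ → Bool) => (η (f p.1), η (f p.2))) ⁻¹' R) :=
    (hR.preimage (by fun_prop)).baireMeasurableSet
  obtain ⟨F, hFc, hFi, c, hF⟩ :=
    exists_continuous_injective_forall_ne_mem_iff hS fun x y => hsym _ _
  have hQ : ∀ a ∈ η '' range (f ∘ F), ∀ b ∈ η '' range (f ∘ F), a ≠ b → ((a, b) ∈ R ↔ c) := by
    rintro _ ⟨_, ⟨x, rfl⟩, rfl⟩ _ ⟨_, ⟨y, rfl⟩, rfl⟩ hab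
    exact hF x y fun h => hab (h ▸ rfl)
  refine ⟨range (f ∘ F), (range_comp_subset_range F f).trans hfP,
    perfect_range_of_continuous_injective (hfc.comp hFc) (hfi.comp hFi), range_nonempty _, ?_⟩
  by_cases hc : c
  · exact Or.inl fun a ha b hb hab => (hQ a ha b hb hab).2 hc
  · exact Or.inr fun a ha b hb hab => mt (hQ a ha b hb hab).1 hc
end
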